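/- Let D be a deterministic parity automaton with state set Q, transition δ, and coloring κ : Q → [1..k]. Define the FDFA F with leading automaton D (without acceptance) and, at each state q, the progress DFA with states Q × [1..k], initial state (q, κ(q)), transitions δ'((p,i),σ) = (δ(p,σ), min(i, κ(δ(p,σ)))), and accepting states {(p,i) : i odd}. Then for every pair (u,v) ∈ Σ* × Σ⁺, (u,v) is accepted by F if and only if u·v^ω is accepted by D, and F is saturated. -/

import Mathlib

open Classical

/-- `wpow v n` is the word `v` repeated `n` times. -/
def wpow {α : Type} (v : List α) : ℕ → List α
  | 0 => []
  | n + 1 => wpow v n ++ v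

/-- The ultimately periodic infinite word `u·v^ω` (meaningful when `v ≠ []`). -/
def upWord {α : Type} [Inhabited α] (u v : List α) : ℕ → α := fun n =>
  if n < u.length then u.getD n default
  else v.getD ((n - u.length) % v.length) default

/-- `l` is a prefix of the infinite word `w`. -/
def prefOf {α : Type} [Inhabited α] (l : List α) (w : ℕ → α) : Prop :=
  ∀ i < l.length, w i = l.getD i default

/-- A complete deterministic automaton (no acceptance condition). -/
structure DetAuto (α : Type) : Type 1 where
  State : Type
  [fin : Fintype State]
  init : State
  step : State → α → State

attribute [instance] DetAuto.fin

namespace DetAuto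

variable {α : Type}

/-- The state reached from `q` after reading the finite word `w`. -/
def run (A : DetAuto α) (q : A.State) (w : List α) : A.State := w.foldl A.step q

/-- The state reached from the initial state after reading `w`. -/
def eval (A : DetAuto α) (w : List α) : A.State := A.run A.init w

/-- The (infinite) run of `A` on an infinite word `w`. -/
def runSeq (A : DetAuto α) (w : ℕ → α) : ℕ → A.State
  | 0 => A.init
  | n + 1 => A.step (A.runSeq w n) (w n)

lemma exists_rep (A : DetAuto α) (u v : List α) :
    ∃ i, ∃ j, 1 ≤ j ∧ A.eval (u ++ wpow v i) = A.eval (u ++ wpow v (i + j)) := by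
  obtain ⟨a, b, hab, hfab⟩ :=
    Finite.exists_ne_map_eq_of_infinite (fun n : ℕ => A.eval (u ++ wpow v n))
  rcases Nat.lt_or_gt_of_ne hab with h | h
  · exact ⟨a, b - a, by omega, by rw [Nat.add_sub_cancel' h.le]; exact hfab⟩
  · exact ⟨b, a - b, by omega, by rw [Nat.add_sub_cancel' h.le]; exact hfab.symm⟩

/-- The least `i` in the normalization of `(u,v)` w.r.t. `A`. -/
noncomputable def normI (A : DetAuto α) (u v : List α) : ℕ :=
  Nat.find (A.exists_rep u v)

lemma normI_spec (A : DetAuto α) (u v : List α) :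
    ∃ j, 1 ≤ j ∧ A.eval (u ++ wpow v (A.normI u v))
      = A.eval (u ++ wpow v (A.normI u v + j)) :=
  Nat.find_spec (A.exists_rep u v)

/-- The least `j` in the normalization of `(u,v)` w.r.t. `A`. -/
noncomputable def normJ (A : DetAuto α) (u v : List α) : ℕ :=
  Nat.find (A.normI_spec u v)

/-- The normalization `(x, y) = (u·v^i, v^j)` of `(u,v)` w.r.t. `A`. -/
noncomputable def normalize (A : DetAuto α) (u v : List α) : List α × List α :=
  (u ++ wpow v (A.normI u v), wpow v (A.normJ u v))

/-- The product automaton. -/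
def prod (A B : DetAuto α) : DetAuto α where
  State := A.State × B.State
  init := (A.init, B.init)
  step := fun p σ => (A.step p.1 σ, B.step p.2 σ)

end DetAuto

/-- A family of DFAs: a leading automaton and a progress DFA for each of its states. -/
structure FDFA (α : Type) : Type 1 where
  leading : DetAuto α
  pState : leading.State → Type
  [pFin : ∀ q, Fintype (pState q)]
  pInit : ∀ q, pState q
  pStep : ∀ q, pState q → α → pState q
  pAcc : ∀ q, Set (pState q)

attribute [instance] FDFA.pFin

namespace FDFA

variable {α : Type}

/-- The progress DFA at state `q` accepts the finite word `y`. -/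
def progAccept (F : FDFA α) (q : F.leading.State) (y : List α) : Prop :=
  y.foldl (F.pStep q) (F.pInit q) ∈ F.pAcc q

/-- `F` accepts the pair `(u, v)`: with `(x,y)` the normalization of `(u,v)` w.r.t.
the leading automaton, the progress DFA at the state reached on `x` accepts `y`. -/
noncomputable def Accept (F : FDFA α) (u v : List α) : Prop :=
  F.progAccept (F.leading.eval (F.leading.normalize u v).1) (F.leading.normalize u v).2

/-- `F` is saturated: acceptance of `(u,v)` depends only on the infinite word `u·v^ω`. -/
def Saturated [Inhabited α] (F : FDFA α) : Prop :=
  ∀ u v u' v' : List α, v ≠ [] → v' ≠ [] → upWord u v = upWord u' v' →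
    (F.Accept u v ↔ F.Accept u' v')

/-- The complement FDFA: same structure, complemented accepting states. -/
def compl (F : FDFA α) : FDFA α :=
  { F with pAcc := fun q => (F.pAcc q)ᶜ }

end FDFA

/-- Parity acceptance: the minimal color visited infinitely often along the run is odd. -/
def parityAccepts {α : Type} (A : DetAuto α) (κ : A.State → ℕ) (w : ℕ → α) : Prop :=
  Odd (sInf {c | {n | κ (A.runSeq w n) = c}.Infinite})

/-- The FDFA associated with a deterministic parity automaton with colors in `[1..k]`:
the progress DFA at `q` has states `Q × [1..k]` (colors encoded in `Fin (k+1)`), starts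
at `(q, κ q)`, tracks the minimal color seen, and accepts when that color is odd. -/
noncomputable def dpaToFdfa {α : Type} (A : DetAuto α) (k : ℕ) (κ : A.State → ℕ)
    (hκ : ∀ q, κ q ≤ k) : FDFA α where
  leading := A
  pState := fun _ => A.State × Fin (k + 1)
  pInit := fun q => (q, ⟨κ q, Nat.lt_succ_of_le (hκ q)⟩)
  pStep := fun _ p σ =>
    (A.step p.1 σ, ⟨min p.2.val (κ (A.step p.1 σ)),
      lt_of_le_of_lt (min_le_left _ _) p.2.isLt⟩)
  pAcc := fun _ => {p | Odd p.2.val}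

/-! The normalization `(x, y)` of `(u, v)` satisfies `u·v^ω = x·y^ω`, and reading `y` from the
state `q` reached on `x` leads back to `q`. So from position `|x|` on, the run on `u·v^ω` is
periodic with period `|y|`: the colors visited infinitely often are exactly the colors visited
while reading `y` from `q`, and their minimum is what the progress DFA at `q` tracks. This
characterization depends on `u·v^ω` alone, which gives saturation. -/

section Words

variable {α : Type}

lemma wpow_length (v : List α) (n : ℕ) : (wpow v n).length = n * v.length := by
  induction n with
  | zero => simp [wpow]
  | succ n ih => simp [wpow, ih, Nat.succ_mul]

lemma wpow_add (v : List α) (m n : ℕ) : wpow v (m + n) = wpow v m ++ wpow v n := by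
  induction n with
  | zero => simp [wpow]
  | succ n ih => rw [← Nat.add_assoc, wpow, ih, wpow, List.append_assoc]

lemma wpow_getD (v : List α) (d : α) {n m : ℕ} (hm : m < n * v.length) :
    (wpow v n).getD m d = v.getD (m % v.length) d := by
  induction n with
  | zero => simp at hm
  | succ n ih =>
    rcases lt_or_ge m (n * v.length) with h | h
    · rw [wpow, List.getD_append _ _ _ _ (by rwa [wpow_length]), ih h]
    · obtain ⟨r, rfl⟩ := Nat.exists_eq_add_of_le h
      have hr : r < v.length := by rw [Nat.succ_mul] at hm; omega
      rw [wpow, List.getD_append_right _ _ _ _ (by rwa [wpow_length]), wpow_length,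
        Nat.add_sub_cancel_left, Nat.mul_add_mod_self_right, Nat.mod_eq_of_lt hr]

variable [Inhabited α]

lemma upWord_append_self (u v : List α) : upWord (u ++ v) v = upWord u v := by
  funext n
  simp only [upWord, List.length_append]
  rcases lt_or_ge n u.length with h | h
  · rw [if_pos (by omega), if_pos h, List.getD_append _ _ _ _ h]
  rw [if_neg (Nat.not_lt.mpr h)]
  rcases lt_or_ge n (u.length + v.length) with h' | h'
  · rw [if_pos h', List.getD_append_right _ _ _ _ h, Nat.mod_eq_of_lt (by omega)]
  · rw [if_neg (Nat.not_lt.mpr h')]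
    obtain ⟨r, rfl⟩ := Nat.exists_eq_add_of_le h'
    rw [Nat.add_sub_cancel_left, Nat.add_assoc, Nat.add_sub_cancel_left, Nat.add_mod_left]

lemma upWord_append_wpow (u v : List α) (i : ℕ) : upWord (u ++ wpow v i) v = upWord u v := by
  induction i with
  | zero => simp [wpow]
  | succ i ih => rw [wpow, ← List.append_assoc, upWord_append_self, ih]

lemma upWord_wpow (u v : List α) (hv : v ≠ []) {j : ℕ} (hj : 0 < j) :
    upWord u (wpow v j) = upWord u v := by
  have hlen : 0 < j * v.length := Nat.mul_pos hj (List.length_pos_iff.mpr hv)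
  funext n
  simp only [upWord]
  split_ifs
  · rfl
  · rw [wpow_length, wpow_getD v _ (Nat.mod_lt _ hlen),
      Nat.mod_mod_of_dvd _ (Dvd.intro_left j rfl)]

lemma upWord_append_wpow_wpow (u v : List α) (hv : v ≠ []) (i : ℕ) {j : ℕ} (hj : 0 < j) :
    upWord (u ++ wpow v i) (wpow v j) = upWord u v := by
  rw [upWord_wpow _ v hv hj, upWord_append_wpow]

lemma upWord_length_add_length_add (u v : List α) (n : ℕ) :
    upWord u v (u.length + v.length + n) = upWord u v (u.length + n) := by
  simp only [upWord]
  rw [if_neg (by omega), if_neg (by omega), Nat.add_assoc, Nat.add_sub_cancel_left,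
    Nat.add_sub_cancel_left, Nat.add_mod_left]

lemma prefOf_append_upWord (u v : List α) : prefOf (u ++ v) (upWord u v) := by
  intro n hn
  rw [List.length_append] at hn
  simp only [upWord]
  rcases lt_or_ge n u.length with h | h
  · rw [if_pos h, List.getD_append _ _ _ _ h]
  · rw [if_neg (by omega), List.getD_append_right _ _ _ _ h, Nat.mod_eq_of_lt (by omega)]

lemma prefOf.of_append_left {l₁ l₂ : List α} {w : ℕ → α} (h : prefOf (l₁ ++ l₂) w) :
    prefOf l₁ w := fun n hn => by
  rw [h n (by simp; omega), List.getD_append _ _ _ _ hn]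

lemma prefOf.of_append_right {l₁ l₂ : List α} {w : ℕ → α} (h : prefOf (l₁ ++ l₂) w) :
    prefOf l₂ (fun n => w (l₁.length + n)) := fun n hn => by
  dsimp only
  rw [h _ (by simp; omega), List.getD_append_right _ _ _ _ (by omega), Nat.add_sub_cancel_left]

end Words

def recurrentValues {β : Type} (f : ℕ → β) : Set β := {b | {n | f n = b}.Infinite}

lemma recurrentValues_eq_image_of_periodic {β : Type} {f : ℕ → β} {L P : ℕ} (hP : 0 < P)
    (hf : Function.Periodic (fun m => f (L + m)) P) :
    recurrentValues f = (fun m => f (L + m)) '' Set.Iic P := by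
  ext b
  constructor
  · intro hb
    obtain ⟨n, hn, hLn⟩ := Set.Infinite.exists_gt hb L
    refine ⟨(n - L) % P, (Nat.mod_lt _ hP).le, ?_⟩
    refine (hf.map_mod_nat _).trans ?_
    show f (L + (n - L)) = b
    rw [Nat.add_sub_cancel' hLn.le]
    exact hn
  · rintro ⟨m, -, rfl⟩
    refine Set.infinite_of_injective_forall_mem (f := fun q : ℕ => L + (m + q * P)) ?_ ?_
    · intro a b hab
      exact Nat.eq_of_mul_eq_mul_right hP (by simpa using hab)
    · intro q
      exact (hf.nat_mul q) m

namespace DetAuto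

variable {α : Type}

lemma eval_append_singleton (A : DetAuto α) (l : List α) (a : α) :
    A.eval (l ++ [a]) = A.step (A.eval l) a := by
  simp [eval, run, List.foldl_append]

lemma runSeq_length_of_prefOf [Inhabited α] (A : DetAuto α) {w : ℕ → α} {l : List α}
    (h : prefOf l w) : A.runSeq w l.length = A.eval l := by
  induction l using List.reverseRecOn with
  | nil => rfl
  | append_singleton l a ih =>
    have ha : w l.length = a := by simpa using h l.length (by simp)
    rw [List.length_append, List.length_singleton, runSeq, ih h.of_append_left, ha,
      eval_append_singleton]

lemma runSeq_add_eq_runSeq_add (A : DetAuto α) {w : ℕ → α} {a b : ℕ}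
    (hab : A.runSeq w a = A.runSeq w b) (hw : ∀ i, w (a + i) = w (b + i)) (n : ℕ) :
    A.runSeq w (a + n) = A.runSeq w (b + n) := by
  induction n with
  | zero => exact hab
  | succ n ih => rw [← Nat.add_assoc, ← Nat.add_assoc, runSeq, runSeq, ih, hw]

lemma normalize_spec (A : DetAuto α) (u v : List α) :
    ∃ i j, 0 < j ∧ A.normalize u v = (u ++ wpow v i, wpow v j) ∧
      A.eval (u ++ wpow v i ++ wpow v j) = A.eval (u ++ wpow v i) := by
  obtain ⟨hj, hloop⟩ := Nat.find_spec (A.normI_spec u v)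
  exact ⟨A.normI u v, A.normJ u v, hj, rfl, by rw [List.append_assoc, ← wpow_add, hloop]; rfl⟩

end DetAuto

def FDFA.progress {α : Type} (F : FDFA α) (q : F.leading.State) : DetAuto α :=
  ⟨F.pState q, F.pInit q, F.pStep q⟩

section DpaToFdfa

variable {α : Type} (A : DetAuto α) (k : ℕ) (κ : A.State → ℕ) (hκ : ∀ q, κ q ≤ k)

lemma dpaToFdfa_progress_runSeq {w : ℕ → α} {L : ℕ} {q : A.State} (hq : A.runSeq w L = q)
    (n : ℕ) :
    let p : A.State × Fin (k + 1) :=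
      ((dpaToFdfa A k κ hκ).progress q).runSeq (fun i => w (L + i)) n
    p.1 = A.runSeq w (L + n) ∧ IsLeast ((fun m => κ (A.runSeq w (L + m))) '' Set.Iic n) p.2 := by
  induction n with
  | zero =>
    subst hq
    have hIic : Set.Iic (0 : ℕ) = {0} := Set.Iic_bot
    refine ⟨rfl, ?_⟩
    rw [hIic, Set.image_singleton]
    exact isLeast_singleton
  | succ n ih =>
    set r := ((dpaToFdfa A k κ hκ).progress q).runSeq (fun i => w (L + i))
    obtain ⟨h1, h2⟩ := ih
    have hstep : A.runSeq w (L + (n + 1)) = A.step (A.runSeq w (L + n)) (w (L + n)) := rfl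
    have hmin : ((r (n + 1)).2 : ℕ) = min ((r n).2 : ℕ) (κ (A.runSeq w (L + (n + 1)))) := by
      rw [hstep, ← h1]; rfl
    have hIic : Set.Iic (n + 1) = Set.Iic n ∪ {n + 1} := by
      rw [← Order.succ_eq_add_one, Order.Iic_succ, Set.insert_eq, Set.union_comm]
    refine ⟨by rw [hstep, ← h1]; rfl, ?_⟩
    rw [hIic, Set.image_union, Set.image_singleton, hmin]
    exact h2.union isLeast_singleton

lemma progAccept_dpaToFdfa_iff [Inhabited α] {x y : List α} (hy : y ≠ [])
    (hloop : A.eval (x ++ y) = A.eval x) :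
    (dpaToFdfa A k κ hκ).progAccept (A.eval x) y ↔ parityAccepts A κ (upWord x y) := by
  set w := upWord x y
  have hpre : prefOf (x ++ y) w := prefOf_append_upWord x y
  have hx : A.runSeq w x.length = A.eval x := A.runSeq_length_of_prefOf hpre.of_append_left
  have hxy : A.runSeq w (x.length + y.length) = A.runSeq w x.length := by
    rw [← List.length_append, A.runSeq_length_of_prefOf hpre, hloop, hx]
  have hper : Function.Periodic (fun m => κ (A.runSeq w (x.length + m))) y.length := fun m => by
    dsimp only
    rw [← Nat.add_assoc, Nat.add_right_comm,
      A.runSeq_add_eq_runSeq_add hxy (upWord_length_add_length_add x y)]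
  have hprog : ((dpaToFdfa A k κ hκ).progress (A.eval x)).eval y =
      ((dpaToFdfa A k κ hκ).progress (A.eval x)).runSeq (fun i => w (x.length + i)) y.length :=
    (DetAuto.runSeq_length_of_prefOf _ hpre.of_append_right).symm
  obtain ⟨-, hleast⟩ := dpaToFdfa_progress_runSeq A k κ hκ hx y.length
  show Odd ((((dpaToFdfa A k κ hκ).progress (A.eval x)).eval y).2 : ℕ) ↔
    Odd (sInf (recurrentValues fun n => κ (A.runSeq w n)))
  rw [recurrentValues_eq_image_of_periodic (List.length_pos_iff.mpr hy) hper, hleast.csInf_eq,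
    hprog]

lemma dpaToFdfa_accept_iff [Inhabited α] {u v : List α} (hv : v ≠ []) :
    (dpaToFdfa A k κ hκ).Accept u v ↔ parityAccepts A κ (upWord u v) := by
  obtain ⟨i, j, hj, hnorm, hloop⟩ := A.normalize_spec u v
  have hy : wpow v j ≠ [] := by
    rw [← List.length_pos_iff, wpow_length]
    exact Nat.mul_pos hj (List.length_pos_iff.mpr hv)
  rw [← upWord_append_wpow_wpow u v hv i hj, ← progAccept_dpaToFdfa_iff A k κ hκ hy hloop]
  show (dpaToFdfa A k κ hκ).progAccept (A.eval (A.normalize u v).1) (A.normalize u v).2 ↔ _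
  rw [hnorm]

end DpaToFdfa

theorem dpa_to_fdfa_correct_general {α : Type} [Inhabited α] (A : DetAuto α) (k : ℕ)
    (κ : A.State → ℕ) (hκhi : ∀ q, κ q ≤ k) :
    (∀ u v : List α, v ≠ [] →
      ((dpaToFdfa A k κ hκhi).Accept u v ↔ parityAccepts A κ (upWord u v))) ∧
    (dpaToFdfa A k κ hκhi).Saturated := by
  refine ⟨fun u v hv => dpaToFdfa_accept_iff A k κ hκhi hv, ?_⟩
  intro u v u' v' hv hv' hw
  rw [dpaToFdfa_accept_iff A k κ hκhi hv, dpaToFdfa_accept_iff A k κ hκhi hv', hw]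

/-- The FDFA built from a deterministic parity automaton `(A, κ)` with
colors in `[1..k]` accepts `(u,v)` iff `A` parity-accepts `u·v^ω`, and it is saturated. -/
theorem dpa_to_fdfa_correct {α : Type} [Inhabited α] (A : DetAuto α) (k : ℕ)
    (κ : A.State → ℕ) (hκlo : ∀ q, 1 ≤ κ q) (hκhi : ∀ q, κ q ≤ k) :
    (∀ u v : List α, v ≠ [] →
      ((dpaToFdfa A k κ hκhi).Accept u v ↔ parityAccepts A κ (upWord u v))) ∧
    (dpaToFdfa A k κ hκhi).Saturated :=
  dpa_to_fdfa_correct_general A k κ hκhi
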